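/- arXiv:2304.08918 — 8 statements merged into one kernel-verified Lean document; each statement's English description precedes it below -/
import Mathlib

section
/- Let σ,τ ∈ End(A) be a strongly regular pair (there exists g₀ ∈ A with δ(g₀) = τ(g₀) − σ(g₀) invertible) and let X be a symmetric (σ,τ)-derivation with values in an A-bimodule M. Then there exists a unique m₀ ∈ M such that X(f) = m₀τ(f) − σ(f)m₀ and [m₀, τ(f)] = [m₀, σ(f)] = 0 for all f ∈ A. -/
open MulOpposite

/-- If `(σ,τ)` is a strongly regular pair of endomorphisms of `A` and `X` is a symmetric
`(σ,τ)`-derivation with values in an `A`-bimodule `M`, then there exists a unique `m₀ ∈ M`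
with `X f = m₀ τ(f) - σ(f) m₀` and `[m₀, τ f] = [m₀, σ f] = 0` for all `f`. -/
theorem stmt4 (K A M : Type*) [Field K] [CharZero K] [Ring A] [Algebra K A]
    [AddCommGroup M] [Module K M] [Module A M] [Module Aᵐᵒᵖ M] [SMulCommClass A Aᵐᵒᵖ M]
    (σ τ : A →ₐ[K] A)
    (hreg : ∃ g₀ : A, IsUnit (τ g₀ - σ g₀))
    (X : A →ₗ[K] M)
    (hX₁ : ∀ f g : A, X (f * g) = σ f • X g + MulOpposite.op (τ g) • X f)
    (hX₂ : ∀ f g : A, X (f * g) = τ f • X g + MulOpposite.op (σ g) • X f) :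
    ∃! m₀ : M,
      (∀ f : A, X f = MulOpposite.op (τ f) • m₀ - σ f • m₀) ∧
      (∀ f : A, MulOpposite.op (τ f) • m₀ = τ f • m₀) ∧
      (∀ f : A, MulOpposite.op (σ f) • m₀ = σ f • m₀) := by
  haveI : SMulCommClass Aᵐᵒᵖ A M := SMulCommClass.symm A Aᵐᵒᵖ M
  obtain ⟨g₀, hu⟩ := hreg
  set u : Aˣ := hu.unit with hu_def
  have hu1 : (u : A) = τ g₀ - σ g₀ := hu.unit_spec
  set v : A := ((u⁻¹ : Aˣ) : A) with hv_def
  have hvu : v * (τ g₀ - σ g₀) = 1 := by rw [← hu1]; exact u.inv_mul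
  have huv : (τ g₀ - σ g₀) * v = 1 := by rw [← hu1]; exact u.mul_inv
  -- key symmetry relation
  have key : ∀ f g : A, (τ f - σ f) • X g = op (τ g - σ g) • X f := by
    intro f g
    have h := (hX₁ f g).symm.trans (hX₂ f g)
    rw [sub_smul, op_sub, sub_smul, sub_eq_sub_iff_add_eq_add]
    exact h.symm.trans (add_comm _ _)
  -- op v • X g₀ = v • X g₀
  have hveq : op v • X g₀ = v • X g₀ := by
    have h := key g₀ g₀
    have h2 := congrArg (fun m => v • op v • m) h
    rw [smul_comm v (op v), smul_smul v, hvu, one_smul, smul_smul (op v),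
      ← op_mul, huv, op_one, one_smul] at h2
    exact h2
  set m₀ : M := v • X g₀ with hm₀
  -- X f = (τ f - σ f) • m₀
  have hA : ∀ f : A, X f = (τ f - σ f) • m₀ := by
    intro f
    have h := key f g₀
    have h2 := congrArg (fun m => op v • m) h
    rw [smul_smul (op v), ← op_mul, huv, op_one, one_smul,
      smul_comm (op v) (τ f - σ f), hveq] at h2
    exact h2.symm
  -- X f = op (τ f - σ f) • m₀
  have hB : ∀ f : A, X f = op (τ f - σ f) • m₀ := by
    intro f
    have h := key g₀ f
    have h2 := congrArg (fun m => v • m) h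
    rw [smul_smul v, hvu, one_smul, smul_comm v (op (τ f - σ f))] at h2
    exact h2
  have hswap : ∀ f : A, op (τ f - σ f) • m₀ = (τ f - σ f) • m₀ := fun f =>
    (hB f).symm.trans (hA f)
  -- commutation with τ
  have htau : ∀ g : A, op (τ g) • m₀ = τ g • m₀ := by
    intro g
    have hz : (τ g₀ - σ g₀) • (τ g • m₀ - op (τ g) • m₀) = 0 := by
      have h := hX₁ g₀ g
      rw [hA (g₀ * g), hA g, hB g₀, hswap g₀,
        smul_comm (op (τ g)) (τ g₀ - σ g₀), map_mul, map_mul] at h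
      simp only [sub_smul, smul_sub, mul_smul] at h ⊢
      linear_combination (norm := abel) h
    have h2 := congrArg (fun m => v • m) hz
    simp only [smul_zero] at h2
    rw [smul_smul, hvu, one_smul] at h2
    exact (sub_eq_zero.mp h2).symm
  -- commutation with σ
  have hsig : ∀ g : A, op (σ g) • m₀ = σ g • m₀ := by
    intro g
    have h := hswap g
    rw [op_sub, sub_smul, sub_smul, htau g] at h
    have h5 := sub_right_injective h
    exact h5
  -- main formula
  have hmain : ∀ f : A, X f = op (τ f) • m₀ - σ f • m₀ := by
    intro f
    rw [hA f, sub_smul, htau f]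
  refine ⟨m₀, ⟨hmain, htau, hsig⟩, ?_⟩
  rintro m ⟨h1, h2, h3⟩
  have : X g₀ = (τ g₀ - σ g₀) • m := by
    rw [h1 g₀, h2 g₀, sub_smul]
  have h4 := congrArg (fun x => v • x) this
  rw [smul_smul, hvu, one_smul] at h4
  exact h4.symm
end

section
/- If (σ,τ) is a strongly regular pair of endomorphisms of A, then every symmetric (σ,τ)-derivation of A with values in an A-bimodule M is inner, i.e. of the form X(f) = m₀τ(f) − σ(f)m₀ for some m₀ ∈ M. -/
/-- If `(σ,τ)` is a strongly regular pair of endomorphisms of `A`, then every symmetric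
`(σ,τ)`-derivation of `A` with values in an `A`-bimodule `M` is inner. -/
theorem stmt5 (K A M : Type*) [Field K] [Ring A] [Algebra K A]
    [AddCommGroup M] [Module K M] [Module A M] [Module Aᵐᵒᵖ M] [SMulCommClass A Aᵐᵒᵖ M]
    (σ τ : A →ₐ[K] A)
    (hreg : ∃ g₀ : A, IsUnit (τ g₀ - σ g₀))
    (X : A →ₗ[K] M)
    (hX₁ : ∀ f g : A, X (f * g) = σ f • X g + MulOpposite.op (τ g) • X f)
    (hX₂ : ∀ f g : A, X (f * g) = τ f • X g + MulOpposite.op (σ g) • X f) :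
    ∃ m₀ : M, ∀ f : A, X f = MulOpposite.op (τ f) • m₀ - σ f • m₀ := by
  classical
  obtain ⟨g₀, hureg⟩ := hreg
  obtain ⟨w, hw⟩ := hureg
  set u : A := τ g₀ - σ g₀ with hu_def
  set v : A := ((w⁻¹ : Aˣ) : A) with hv_def
  have hvu : v * u = 1 := by rw [hv_def, ← hw]; exact w.inv_mul
  have huv : u * v = 1 := by rw [hv_def, ← hw]; exact w.mul_inv
  set c : M := X g₀ with hc_def
  -- Step A : op u • X f = τ f • c - σ f • c
  have hA : ∀ f : A, MulOpposite.op u • X f = τ f • c - σ f • c := by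
    intro f
    have h := (hX₁ f g₀).symm.trans (hX₂ f g₀)
    -- h : σ f • c + op (τ g₀) • X f = τ f • c + op (σ g₀) • X f
    have hop : MulOpposite.op u = MulOpposite.op (τ g₀) - MulOpposite.op (σ g₀) := by
      rw [hu_def, MulOpposite.op_sub]
    rw [hop, sub_smul]
    exact sub_eq_sub_iff_add_eq_add.mpr ((add_comm _ _).trans h)
  -- Step B : u • X f = op (τ f) • c - op (σ f) • c
  have hB : ∀ f : A, u • X f = MulOpposite.op (τ f) • c - MulOpposite.op (σ f) • c := by
    intro f
    have h := (hX₁ g₀ f).symm.trans (hX₂ g₀ f)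
    -- h : σ g₀ • X f + op (τ f) • c = τ g₀ • X f + op (σ f) • c
    rw [hu_def, sub_smul]
    exact sub_eq_sub_iff_add_eq_add.mpr (h.symm.trans (add_comm _ _))
  -- Step C : u • c = op u • c
  have hC : u • c = MulOpposite.op u • c := by
    rw [hA g₀, hu_def, sub_smul]
  -- m₀
  set m₀ : M := v • c with hm₀_def
  have hvc : m₀ = MulOpposite.op v • c := by
    have h1 : c = MulOpposite.op u • m₀ := by
      calc c = (v * u) • c := by rw [hvu, one_smul]
        _ = v • (u • c) := mul_smul _ _ _
        _ = v • (MulOpposite.op u • c) := by rw [hC]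
        _ = MulOpposite.op u • (v • c) := smul_comm v (MulOpposite.op u) c
    calc m₀ = (MulOpposite.op v * MulOpposite.op u) • m₀ := by
          rw [← MulOpposite.op_mul, huv, MulOpposite.op_one, one_smul]
      _ = MulOpposite.op v • (MulOpposite.op u • m₀) := mul_smul _ _ _
      _ = MulOpposite.op v • c := by rw [← h1]
  -- Step D : (τ f - σ f) • m₀ = X f
  have hD : ∀ f : A, (τ f - σ f) • m₀ = X f := by
    intro f
    calc (τ f - σ f) • m₀ = (τ f - σ f) • (MulOpposite.op v • c) := by rw [← hvc]
      _ = MulOpposite.op v • ((τ f - σ f) • c) := (smul_comm (τ f - σ f) (MulOpposite.op v) c)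
      _ = MulOpposite.op v • (MulOpposite.op u • X f) := by rw [sub_smul, ← hA f]
      _ = (MulOpposite.op v * MulOpposite.op u) • X f := (mul_smul _ _ _).symm
      _ = X f := by rw [← MulOpposite.op_mul, huv, MulOpposite.op_one, one_smul]
  -- Step F : τ g • m₀ = op (τ g) • m₀
  have hF : ∀ g : A, τ g • m₀ = MulOpposite.op (τ g) • m₀ := by
    intro g
    have key : ∀ f : A, (τ f - σ f) • (τ g • m₀ - MulOpposite.op (τ g) • m₀) = 0 := by
      intro f
      have h1 := hX₁ f g
      rw [← hD (f * g), ← hD f, ← hD g] at h1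
      have expand : τ (f * g) - σ (f * g) = σ f * (τ g - σ g) + (τ f - σ f) * τ g := by
        rw [map_mul, map_mul, mul_sub, sub_mul]; abel
      rw [expand, add_smul, mul_smul, mul_smul] at h1
      have h2 : (τ f - σ f) • (τ g • m₀) = MulOpposite.op (τ g) • ((τ f - σ f) • m₀) :=
        add_left_cancel h1
      rw [smul_sub, h2, smul_comm (τ f - σ f) (MulOpposite.op (τ g)) m₀, sub_self]
    have h3 := key g₀
    have h4 : τ g • m₀ - MulOpposite.op (τ g) • m₀ = 0 := by
      have h5 := congrArg (fun z => v • z) h3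
      simpa [← mul_smul, hvu, ← hu_def] using h5
    exact sub_eq_zero.mp h4
  -- conclusion
  refine ⟨m₀, fun f => ?_⟩
  calc X f = (τ f - σ f) • m₀ := (hD f).symm
    _ = τ f • m₀ - σ f • m₀ := sub_smul _ _ _
    _ = MulOpposite.op (τ f) • m₀ - σ f • m₀ := by rw [hF f]
end

section
/- For the polynomial algebra K[x] and any endomorphisms σ, τ, the quotient of the module of (σ,τ)-derivations of K[x] by the submodule of inner (σ,τ)-derivations is isomorphic to K[x]/I_δ, where I_δ is the ideal generated by δ(x) = τ(x) − σ(x). (Each (σ,τ)-derivation X is determined by X(x), giving Der_{(σ,τ)}(K[x]) ≅ K[x], and inner derivations correspond exactly to multiples of δ(x).) -/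
/-- For the polynomial algebra `K[x]` and endomorphisms `σ, τ`, the quotient
`Der_{(σ,τ)}(K[x])/Inn_{(σ,τ)}(K[x])` is isomorphic to `K[x]/⟨δ(x)⟩`:
a `(σ,τ)`-derivation `X` is inner precisely when `X(x)` lies in the ideal
generated by `δ(x) = τ(x) - σ(x)`, and every polynomial arises as `X(x)` for
some `(σ,τ)`-derivation `X`. -/
theorem stmt7 (K : Type*) [Field K] [CharZero K]
    (σ τ : Polynomial K →ₐ[K] Polynomial K) :
    (∀ X : Polynomial K →ₗ[K] Polynomial K,
      (∀ p q : Polynomial K, X (p * q) = σ p * X q + X p * τ q) →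
      ((∃ g₀ : Polynomial K, ∀ p, X p = g₀ * (τ p - σ p)) ↔
        X Polynomial.X ∈ Ideal.span {τ Polynomial.X - σ Polynomial.X})) ∧
    (∀ p₀ : Polynomial K, ∃ X : Polynomial K →ₗ[K] Polynomial K,
      (∀ p q : Polynomial K, X (p * q) = σ p * X q + X p * τ q) ∧
      X Polynomial.X = p₀) := by
  have hCσ : ∀ a : K, σ (Polynomial.C a) = Polynomial.C a := by
    intro a
    rw [← Polynomial.algebraMap_eq]; exact σ.commutes a
  have hCτ : ∀ a : K, τ (Polynomial.C a) = Polynomial.C a := by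
    intro a
    rw [← Polynomial.algebraMap_eq]; exact τ.commutes a
  constructor
  · intro X hX
    constructor
    · rintro ⟨g₀, hg⟩
      rw [hg]
      exact Ideal.mem_span_singleton.mpr ⟨g₀, mul_comm _ _⟩
    · intro h
      obtain ⟨g, hg⟩ := Ideal.mem_span_singleton.mp h
      have h1 : X 1 = 0 := by
        have h2 : X 1 = X 1 + X 1 := by simpa using hX 1 1
        exact (left_eq_add.mp h2)
      have hC : ∀ a : K, X (Polynomial.C a) = 0 := by
        intro a
        rw [← Polynomial.algebraMap_eq, Algebra.algebraMap_eq_smul_one, map_smul, h1,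
          smul_zero]
      refine ⟨g, ?_⟩
      intro p
      induction p using Polynomial.induction_on with
      | C a => rw [hC, hCσ, hCτ, sub_self, mul_zero]
      | add p q hp hq => rw [map_add, hp, hq, map_add, map_add]; ring
      | monomial n a ih =>
        have e : Polynomial.C a * Polynomial.X ^ (n + 1)
            = (Polynomial.C a * Polynomial.X ^ n) * Polynomial.X := by ring
        rw [e, hX, ih, hg]
        simp only [map_mul, map_pow]
        ring
  · intro p₀
    set M : Matrix (Fin 2) (Fin 2) (Polynomial K) :=
      !![σ Polynomial.X, p₀; 0, τ Polynomial.X] with hM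
    have key : ∀ p : Polynomial K,
        (Polynomial.aeval M p) 0 0 = σ p ∧ (Polynomial.aeval M p) 1 1 = τ p ∧
          (Polynomial.aeval M p) 1 0 = 0 := by
      intro p
      induction p using Polynomial.induction_on with
      | C a =>
        refine ⟨?_, ?_, ?_⟩ <;>
        · simp [Polynomial.aeval_C, Matrix.algebraMap_matrix_apply,
            Polynomial.algebraMap_eq, hCσ, hCτ]
      | add p q hp hq =>
        refine ⟨?_, ?_, ?_⟩ <;>
          simp [map_add, Matrix.add_apply, hp.1, hp.2.1, hp.2.2, hq.1, hq.2.1, hq.2.2]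
      | monomial n a ih =>
        have e : Polynomial.C a * Polynomial.X ^ (n + 1)
            = (Polynomial.C a * Polynomial.X ^ n) * Polynomial.X := by ring
        rw [e, map_mul, Polynomial.aeval_X]
        refine ⟨?_, ?_, ?_⟩
        · rw [Matrix.mul_apply, Fin.sum_univ_two, ih.1]
          simp [hM, map_mul]
        · rw [Matrix.mul_apply, Fin.sum_univ_two, ih.2.1, ih.2.2]
          simp [hM, map_mul]
        · rw [Matrix.mul_apply, Fin.sum_univ_two, ih.2.2]
          simp [hM]
    refine ⟨{ toFun := fun p => (Polynomial.aeval M p) 0 1,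
              map_add' := by intro p q; simp [map_add, Matrix.add_apply],
              map_smul' := by intro c p; simp [map_smul, Matrix.smul_apply] }, ?_, ?_⟩
    · intro p q
      show (Polynomial.aeval M (p * q)) 0 1
          = σ p * (Polynomial.aeval M q) 0 1 + (Polynomial.aeval M p) 0 1 * τ q
      rw [map_mul, Matrix.mul_apply, Fin.sum_univ_two, (key p).1, (key q).2.1]
    · show (Polynomial.aeval M Polynomial.X) 0 1 = p₀
      simp [hM]
end

section
/- Let σ,τ be the endomorphisms of K[x] given by σ(p)(x) = p(qx) and τ(p)(x) = p(x), with q ∈ K, q ≠ 0, 1. Then the first (σ,τ)-Hochschild cohomology group of K[x], namely Der_{(σ,τ)}(K[x]) modulo inner (σ,τ)-derivations, is isomorphic to K (represented by the constant polynomials). -/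
open Polynomial

/-- For `σ(x) = qx`, `τ(x) = x` on `K[x]` with `q ≠ 0, 1`, the first
`(σ,τ)`-Hochschild cohomology group `Der_{(σ,τ)}/Inn_{(σ,τ)}` is isomorphic to `K`:
a `(σ,τ)`-derivation `X` is inner precisely when the constant term of `X(x)` vanishes,
and every constant `c ∈ K` arises as `X(x)` for some `(σ,τ)`-derivation. -/
theorem stmt8 (K : Type*) [Field K] [CharZero K] (q : K) (hq0 : q ≠ 0) (hq1 : q ≠ 1)
    (σ τ : Polynomial K →ₐ[K] Polynomial K)
    (hσ : σ Polynomial.X = Polynomial.C q * Polynomial.X)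
    (hτ : τ Polynomial.X = Polynomial.X) :
    (∀ X : Polynomial K →ₗ[K] Polynomial K,
      (∀ p r : Polynomial K, X (p * r) = σ p * X r + X p * τ r) →
      ((∃ g₀ : Polynomial K, ∀ p, X p = g₀ * (τ p - σ p)) ↔
        (X Polynomial.X).coeff 0 = 0)) ∧
    (∀ c : K, ∃ X : Polynomial K →ₗ[K] Polynomial K,
      (∀ p r : Polynomial K, X (p * r) = σ p * X r + X p * τ r) ∧
      X Polynomial.X = Polynomial.C c) := by
  have hq1' : (1 : K) - q ≠ 0 := sub_ne_zero.mpr (Ne.symm hq1)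
  have hτ' : ∀ p : Polynomial K, τ p = p := by
    have h : τ = AlgHom.id K (Polynomial K) :=
      Polynomial.algHom_ext (by simpa using hτ)
    intro p; rw [h]; rfl
  have hσC : ∀ a : K, σ (C a) = C a := by
    intro a
    have := σ.commutes a
    simpa [Polynomial.algebraMap_eq] using this
  -- constant coefficient is preserved by σ
  have hσ0 : ∀ p : Polynomial K, (σ p).coeff 0 = p.coeff 0 := by
    have h : (aeval (0 : K)).comp σ = aeval (0 : K) := by
      apply Polynomial.algHom_ext
      simp [hσ]
    intro p
    have := DFunLike.congr_fun h p
    simp only [AlgHom.coe_comp, Function.comp_apply] at this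
    rw [coeff_zero_eq_eval_zero, coeff_zero_eq_eval_zero, ← coe_aeval_eq_eval]
    exact this
  have hdivX_X : (X : Polynomial K).divX = 1 := by
    ext n
    simp [coeff_divX, coeff_one, coeff_X]
  -- exact division by X when the constant term vanishes
  have hXdiv : ∀ s : Polynomial K, s.coeff 0 = 0 → X * s.divX = s := by
    intro s hs
    have := X_mul_divX_add s
    rwa [hs, map_zero, add_zero] at this
  constructor
  · -- first part
    intro D hD
    have hD1 : D 1 = 0 := by
      have := hD 1 1
      simp only [mul_one, map_one, one_mul] at this
      -- D 1 = D 1 + D 1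
      have h2 : D 1 + D 1 = D 1 + 0 := by
        rw [add_zero]; linear_combination (norm := ring_nf) -this
      exact (add_left_cancel h2)
    have hDC : ∀ a : K, D (C a) = 0 := by
      intro a
      rw [← mul_one (C a), ← smul_eq_C_mul, map_smul, hD1, smul_zero]
    constructor
    · rintro ⟨g₀, hg⟩
      rw [hg, hτ, hσ, coeff_zero_eq_eval_zero]
      simp
    · intro h0
      set g₀ : Polynomial K := C ((1 - q)⁻¹) * (D Polynomial.X).divX with hg₀
      have hkey : g₀ * (τ Polynomial.X - σ Polynomial.X) = D Polynomial.X := by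
        rw [hτ, hσ]
        have hx : Polynomial.X - C q * Polynomial.X = C (1 - q) * Polynomial.X := by
          rw [map_sub, map_one]; ring
        rw [hx, hg₀]
        have : C ((1 - q)⁻¹) * (D Polynomial.X).divX * (C (1 - q) * Polynomial.X)
            = (C ((1 - q)⁻¹) * C (1 - q)) * (Polynomial.X * (D Polynomial.X).divX) := by
          ring
        rw [this, ← map_mul, inv_mul_cancel₀ hq1', map_one, one_mul, hXdiv _ h0]
      refine ⟨g₀, fun p => ?_⟩
      induction p using Polynomial.induction_on with
      | C a => rw [hDC, hτ' (C a), hσC, sub_self, mul_zero]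
      | add p r hp hr =>
          rw [map_add, hp, hr, map_add, map_add]
          ring
      | monomial n a ih =>
          have hsplit : C a * Polynomial.X ^ (n + 1)
              = (C a * Polynomial.X ^ n) * Polynomial.X := by ring
          rw [hsplit, hD, ih, ← hkey]
          simp only [map_mul, map_pow, hτ', hσ, hσC]
          ring
  · -- second part
    intro c
    set k : K := c / (1 - q) with hk
    have hsmul : ∀ (a : K) (p : Polynomial K), (a • p).divX = a • p.divX := by
      intro a p; ext n; simp [coeff_divX]
    refine ⟨{ toFun := fun p => C k * (p - σ p).divX,
              map_add' := by
                intro p r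
                rw [show p + r - σ (p + r) = (p - σ p) + (r - σ r) by rw [map_add]; ring,
                  divX_add]
                ring,
              map_smul' := by
                intro a p
                simp only [RingHom.id_apply]
                rw [show a • p - σ (a • p) = a • (p - σ p) by
                    rw [map_smul, smul_sub],
                  hsmul, smul_eq_C_mul, smul_eq_C_mul]
                ring }, ?_, ?_⟩
    · -- Leibniz rule
      have key : ∀ s : Polynomial K,
          X * (C k * (s - σ s).divX) = C k * (s - σ s) := by
        intro s
        have h0 : (s - σ s).coeff 0 = 0 := by
          rw [coeff_sub, hσ0, sub_self]
        rw [show X * (C k * (s - σ s).divX) = C k * (X * (s - σ s).divX) by ring,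
          hXdiv _ h0]
      intro p r
      simp only [LinearMap.coe_mk, AddHom.coe_mk]
      apply mul_left_cancel₀ (X_ne_zero : (X : Polynomial K) ≠ 0)
      rw [show X * (σ p * (C k * (r - σ r).divX) + C k * (p - σ p).divX * τ r)
          = σ p * (X * (C k * (r - σ r).divX)) + (X * (C k * (p - σ p).divX)) * τ r
          by ring, key, key, key, hτ' r, map_mul]
      ring
    · simp only [LinearMap.coe_mk, AddHom.coe_mk]
      rw [hσ, show (X : Polynomial K) - C q * X = C (1 - q) * X by
        rw [map_sub, map_one]; ring, divX_C_mul, hdivX_X, mul_one, ← map_mul, hk,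
        div_mul_cancel₀ _ hq1']
end

section
/- Let Σ = (A, {X_a}) be a strongly regular symmetric (σ,τ)-algebra with X_a(f) = f_a·δ_a(f), where f_a commutes with σ_a(f) and τ_a(f) for all f, and δ_a = τ_a − σ_a. If ∇ is a symmetric left (σ,τ)-connection on a left Σ-module (M, {(σ̂_a, τ̂_a)}), i.e. ∇_{X_a}(fm) = σ_a(f)∇_{X_a}m + X_a(f)τ̂_a(m) and ∇_{X_a}(fm) = τ_a(f)∇_{X_a}m + X_a(f)σ̂_a(m), then necessarily ∇_{X_a}(m) = f_a(τ̂_a(m) − σ̂_a(m)) for all m ∈ M. In particular the symmetric (σ,τ)-connection is unique. -/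
/-- On a strongly regular symmetric `(σ,τ)`-algebra with `X a f = f_a · δ_a(f)`,
any symmetric left `(σ,τ)`-connection on a left `Σ`-module necessarily satisfies
`∇_{X_a}(m) = f_a • (τ̂_a(m) - σ̂_a(m))`; in particular it is unique. -/
theorem stmt12 (A M : Type*) [Ring A] [Algebra ℂ A]
    [AddCommGroup M] [Module ℂ M] [Module A M]
    (ι : Type*) (σ τ : ι → (A →ₐ[ℂ] A)) (f : ι → A)
    (hreg : ∀ a : ι, ∃ g : A, IsUnit (τ a g - σ a g))
    (hcomm : ∀ (a : ι) (g : A),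
      f a * σ a g = σ a g * f a ∧ f a * τ a g = τ a g * f a)
    (X : ι → A → A) (hX : ∀ a g, X a g = f a * (τ a g - σ a g))
    (σh τh : ι → M →ₗ[ℂ] M)
    (hσh : ∀ a (g : A) (m : M), σh a (g • m) = σ a g • σh a m)
    (hτh : ∀ a (g : A) (m : M), τh a (g • m) = τ a g • τh a m)
    (Conn : ι → M → M)
    (hLeib₁ : ∀ a (g : A) (m : M),
      Conn a (g • m) = σ a g • Conn a m + X a g • τh a m)
    (hLeib₂ : ∀ a (g : A) (m : M),
      Conn a (g • m) = τ a g • Conn a m + X a g • σh a m) :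
    ∀ (a : ι) (m : M), Conn a m = f a • (τh a m - σh a m) := by
  intro a m
  obtain ⟨g, hg⟩ := hreg a
  set δ : A := τ a g - σ a g with hδ
  have hfδ : f a * δ = δ * f a := by
    have h := hcomm a g
    simp only [hδ, mul_sub, sub_mul, h.1, h.2]
  -- key equation
  have key : δ • Conn a m = (f a * δ) • (τh a m - σh a m) := by
    have h := (hLeib₁ a g m).symm.trans (hLeib₂ a g m)
    have h2 : (τ a g - σ a g) • Conn a m = X a g • (τh a m - σh a m) := by
      rw [sub_smul, smul_sub, sub_eq_sub_iff_add_eq_add]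
      exact h.symm.trans (add_comm _ _)
    rw [hX] at h2
    exact h2
  obtain ⟨u, hu⟩ := hg
  have hinv : (↑u⁻¹ : A) * δ = 1 := by rw [← hu]; exact u.inv_mul
  calc Conn a m = ((↑u⁻¹ : A) * δ) • Conn a m := by rw [hinv, one_smul]
    _ = (↑u⁻¹ : A) • (δ • Conn a m) := by rw [mul_smul]
    _ = (↑u⁻¹ : A) • ((f a * δ) • (τh a m - σh a m)) := by rw [key]
    _ = ((↑u⁻¹ : A) * (δ * f a)) • (τh a m - σh a m) := by rw [← hfδ, ← mul_smul]
    _ = f a • (τh a m - σh a m) := by rw [← mul_assoc, hinv, one_mul]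
end

section
/- With ∇_{X_a}(A) = A − U_aAU_a⁻¹Γ_a on M_N(ℂ) and commuting invertible U_a, the curvature Curv(X_a, X_b) = ∇_{X_a}∘∇_{X_b} − ∇_{X_b}∘∇_{X_a} is given explicitly by Curv(X_a, X_b)(A) = U_aU_b·A·[U_b⁻¹Γ_b, U_a⁻¹Γ_a] for all A ∈ M_N(ℂ). -/
lemma aux16 {R} [Ring R] (ua ub va vb ga gb A : R) (h : ua*ub = ub*ua) :
    (A - ub*A*vb*gb - ua*(A - ub*A*vb*gb)*va*ga) - (A - ua*A*va*ga - ub*(A - ua*A*va*ga)*vb*gb)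
      = ua*ub*A*(vb*gb*(va*ga) - va*ga*(vb*gb)) := by
  have key : ∀ x : R, ub*(ua*x) = ua*(ub*x) := fun x => by
    rw [← mul_assoc, ← h, mul_assoc]
  simp only [sub_mul, mul_sub, mul_assoc, key]
  abel

/-- With `∇_{X_a}(A) = A - U_a A U_a⁻¹ Γ_a` and commuting invertible `U_a`, the curvature
`Curv(X_a, X_b) = ∇_{X_a}∘∇_{X_b} - ∇_{X_b}∘∇_{X_a}` is given by
`Curv(X_a, X_b)(A) = U_a U_b A [U_b⁻¹Γ_b, U_a⁻¹Γ_a]`. -/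
theorem stmt16 (N n : ℕ) (U : Fin n → GL (Fin N) ℂ)
    (hU : ∀ a b, (U a : Matrix (Fin N) (Fin N) ℂ) * (U b : Matrix (Fin N) (Fin N) ℂ)
      = (U b : Matrix (Fin N) (Fin N) ℂ) * (U a : Matrix (Fin N) (Fin N) ℂ))
    (Γ : Fin n → Matrix (Fin N) (Fin N) ℂ)
    (Conn : Fin n → Matrix (Fin N) (Fin N) ℂ → Matrix (Fin N) (Fin N) ℂ)
    (hConn : ∀ a A, Conn a A =
      A - (U a : Matrix (Fin N) (Fin N) ℂ) * A * (↑(U a)⁻¹ : Matrix (Fin N) (Fin N) ℂ) * Γ a) :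
    ∀ a b A, Conn a (Conn b A) - Conn b (Conn a A) =
      (U a : Matrix (Fin N) (Fin N) ℂ) * (U b : Matrix (Fin N) (Fin N) ℂ) * A *
        ((↑(U b)⁻¹ : Matrix (Fin N) (Fin N) ℂ) * Γ b *
            ((↑(U a)⁻¹ : Matrix (Fin N) (Fin N) ℂ) * Γ a) -
          (↑(U a)⁻¹ : Matrix (Fin N) (Fin N) ℂ) * Γ a *
            ((↑(U b)⁻¹ : Matrix (Fin N) (Fin N) ℂ) * Γ b)) := by
  intro a b A
  simp only [hConn]
  exact aux16 _ _ _ _ _ _ _ (hU a b)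
end

section
/- Let A be a commutative algebra with (σ,τ) a regular pair of endomorphisms, and suppose ĝ ∈ A is a common divisor of the image of δ = τ − σ with ĝ = δ(g₀) for some g₀ ∈ A. Then the A-module Der_{(σ,τ)}(A) of (σ,τ)-derivations is free of rank one with basis the map δ/ĝ (defined by (δ/ĝ)(f) = the unique element c with c·ĝ = δ(f)). -/
/-- Let `(σ,τ)` be a regular pair of endomorphisms of a commutative algebra `A`, and
let `ĝ = δ(g₀)` be a common divisor of the image of `δ = τ - σ`. Then the map
`δ/ĝ` (given by `D` with `D(f)·ĝ = δ(f)`) is a `(σ,τ)`-derivation, and every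
`(σ,τ)`-derivation `X` is a unique `A`-multiple of it: `Der_{(σ,τ)}(A)` is free of
rank one with basis `δ/ĝ`. -/
theorem stmt18 (K A : Type*) [Field K] [CommRing A] [Algebra K A]
    (σ τ : A →ₐ[K] A)
    (hreg : ∃ a₀ : A, ∀ b : A, b * (τ a₀ - σ a₀) = 0 → b = 0)
    (gh g₀ : A) (hcd : ∀ f : A, gh ∣ (τ f - σ f)) (hg₀ : τ g₀ - σ g₀ = gh)
    (D : A → A) (hD : ∀ f : A, D f * gh = τ f - σ f) :
    (∀ f g : A, D (f * g) = σ f * D g + D f * τ g) ∧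
    (∀ X : A →ₗ[K] A, (∀ f g : A, X (f * g) = σ f * X g + X f * τ g) →
      ∃! f₀ : A, ∀ a : A, X a = f₀ * D a) := by
  obtain ⟨a₀, ha₀⟩ := hreg
  -- gh is a nonzerodivisor
  have hghreg : ∀ b : A, b * gh = 0 → b = 0 := by
    intro b hb
    obtain ⟨c, hc⟩ := hcd a₀
    apply ha₀
    rw [hc, ← mul_assoc, hb, zero_mul]
  constructor
  · intro f g
    apply sub_eq_zero.mp
    apply hghreg (D (f * g) - (σ f * D g + D f * τ g))
    have : D (f * g) * gh = (σ f * D g + D f * τ g) * gh := by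
      have h1 := hD (f * g)
      rw [map_mul, map_mul] at h1
      linear_combination h1 - σ f * hD g - τ g * hD f
    rw [sub_mul, this, sub_self]
  · intro X hX
    -- key symmetry: X g * δ f = X f * δ g
    have hsym : ∀ f g : A, X g * (τ f - σ f) = X f * (τ g - σ g) := by
      intro f g
      have h1 := hX f g
      have h2 := hX g f
      rw [mul_comm g f] at h2
      have := h1.symm.trans h2
      linear_combination -this
    refine ⟨X g₀, ?_, ?_⟩
    · intro a
      apply sub_eq_zero.mp
      apply hghreg
      have := hsym a g₀
      rw [hg₀] at this
      rw [sub_mul, mul_assoc, hD, this, sub_self]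
    · intro y hy
      have hxg := hy a₀
      have h2 : X a₀ = X g₀ * D a₀ := by
        apply sub_eq_zero.mp
        apply hghreg
        have := hsym a₀ g₀
        rw [hg₀] at this
        rw [sub_mul, mul_assoc, hD, this, sub_self]
      apply sub_eq_zero.mp
      apply ha₀
      rw [← hD a₀, sub_mul, ← mul_assoc, ← mul_assoc, ← hxg, ← h2, sub_self]
end

section
/- Let Σ_ĝ be the (σ,τ)-algebra on a commutative algebra A with tangent space TΣ_ĝ = {X_f : f ∈ A}, where X_f = f·(δ/ĝ), and let ∇ be a left (σ, Id)-connection on a left Σ_ĝ-module M satisfying ∇_{fX_g}(m) = f∇_{X_g}(m). With the (σ, Id)-Lie algebra structure R(X_f ⊗ X_g) = X_{σ(g)} ⊗ X_{σ⁻¹(f)} (for σ an automorphism) and bracket [X_f, X_g]_R = (X_f(g) − X_{σ(g)}(σ⁻¹(f)))·X_1, the curvature Curv(X_f, X_g)(m) = ∇_{X_f}∇_{X_g}(m) − ∇_{X_{σ(g)}}∇_{X_{σ⁻¹(f)}}(m) − ∇_{[X_f,X_g]_R}(m) vanishes for all f, g ∈ A and m ∈ M. -/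
/-- For the `(σ, Id)`-algebra `Σ_ĝ` on a commutative algebra `A` with tangent space
`{X_f = f·(δ/ĝ)}`, a left `(σ, Id)`-connection `∇` on a left `Σ_ĝ`-module `M` that is
`A`-linear in the derivation argument (`∇_{fX_g} = f∇_{X_g}`) has vanishing curvature:
`∇_{X_f}∇_{X_g}(m) - ∇_{X_{σ(g)}}∇_{X_{σ⁻¹(f)}}(m) - ∇_{[X_f,X_g]_R}(m) = 0`, where
`[X_f, X_g]_R = X_{X_f(g) - X_{σ(g)}(σ⁻¹(f))}`. -/
theorem stmt19 (A M : Type*) [CommRing A] [Algebra ℂ A]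
    [AddCommGroup M] [Module A M]
    (σ : A ≃ₐ[ℂ] A) (gh : A)
    (hreg : ∃ a₀ : A, ∀ b : A, b * (a₀ - σ a₀) = 0 → b = 0)
    (hcd : ∀ f : A, gh ∣ (f - σ f))
    (D : A → A) (hD : ∀ f : A, D f * gh = f - σ f)
    (X : A → A → A) (hXdef : ∀ f a : A, X f a = f * D a)
    (Conn : A → M → M)
    (hadd : ∀ (f : A) (m m' : M), Conn f (m + m') = Conn f m + Conn f m')
    (hLeib : ∀ (f a : A) (m : M), Conn f (a • m) = σ a • Conn f m + X f a • m)
    (hlin : ∀ (f g : A) (m : M), Conn (f * g) m = f • Conn g m) :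
    ∀ (f g : A) (m : M),
      Conn f (Conn g m) - Conn (σ g) (Conn (σ.symm f) m)
        - Conn (X f g - X (σ g) (σ.symm f)) m = 0 := by
  intro f g m
  have key : ∀ (h : A) (n : M), Conn h n = h • Conn 1 n := by
    intro h n
    have := hlin h 1 n
    rwa [mul_one] at this
  rw [key g m, key (σ.symm f) m, hLeib, hLeib, key f (Conn 1 m),
    key (σ g) (Conn 1 m), σ.apply_symm_apply, key (X f g - X (σ g) (σ.symm f)) m,
    smul_smul, smul_smul, mul_comm (σ g) f, sub_smul]
  abel
end
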